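/- arXiv:2305.03307 — 2 statements merged into one kernel-verified Lean document; each statement's English description precedes it below -/
import Mathlib

section
/- Let M be a matroid with a total order on its ground set. Every NBC independent set (an independent set containing no broken circuit) is contained in some NBC basis; i.e., the broken circuit complex is pure of dimension equal to the rank of M. -/
/-- `C` is a circuit of the matroid `M`: a minimal dependent subset of the ground set. -/
def Matroid.IsCircuitSet {α : Type*} (M : Matroid α) (C : Set α) : Prop :=
  C ⊆ M.E ∧ ¬ M.Indep C ∧ ∀ e ∈ C, M.Indep (C \ {e})

/-- `B` is a broken circuit of `M` with respect to the linear order on `α`: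
a circuit with its (strictly) smallest element removed. -/
def Matroid.IsBrokenCircuit {α : Type*} [LinearOrder α] (M : Matroid α) (B : Set α) : Prop :=
  ∃ C e, M.IsCircuitSet C ∧ e ∈ C ∧ (∀ x ∈ C, e ≤ x) ∧ B = C \ {e}

/-- An NBC independent set: an independent set containing no broken circuit. -/
def Matroid.IsNBCIndep {α : Type*} [LinearOrder α] (M : Matroid α) (I : Set α) : Prop :=
  M.Indep I ∧ ∀ B, M.IsBrokenCircuit B → ¬ B ⊆ I

/-- An NBC basis: a basis (maximal independent set) containing no broken circuit. -/
def Matroid.IsNBCBase {α : Type*} [LinearOrder α] (M : Matroid α) (B : Set α) : Prop :=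
  M.IsBase B ∧ ∀ B', M.IsBrokenCircuit B' → ¬ B' ⊆ B

/-!
Take a base `B ⊇ I` that is minimal in the colexicographic order. If `B` contained a broken
circuit `C \ {e}` with `e = min C`, then `e ∉ B`, and since `I` contains no broken circuit some
`f ∈ C \ {e}` lies outside `I`. As `C` is the fundamental circuit of `e` in `B`, the exchange
`B - f + e` is again a base containing `I`; it is colex-smaller than `B` because `e < f`.
-/

open Finset.Colex

theorem Finset.Colex.toColex_insert_erase_lt {α : Type*} [LinearOrder α] {s : Finset α}
    {e f : α} (he : e ∉ s) (hf : f ∈ s) (hef : e < f) :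
    toColex (insert e (s.erase f)) < toColex s := by
  conv_rhs => rw [← insert_erase hf]
  exact (insert_lt_insert (fun h ↦ he (mem_of_mem_erase h)) (notMem_erase f s)).2 hef

namespace Matroid

variable {α : Type*} {M : Matroid α} {B C I : Set α} {e f : α}

theorem IsCircuitSet.isCircuit (hC : M.IsCircuitSet C) : M.IsCircuit C :=
  isCircuit_iff_dep_forall_sdiff_singleton_indep.2 ⟨(not_indep_iff hC.1).1 hC.2.1, hC.2.2⟩

theorem IsBase.exchange_isBase_of_isCircuit_subset_insert (hB : M.IsBase B) (hC : M.IsCircuit C)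
    (hCB : C ⊆ insert e B) (heB : e ∉ B) (hfC : f ∈ C) (hfe : f ≠ e) :
    M.IsBase (insert e (B \ {f})) := by
  have heC : e ∈ C := by
    by_contra heC
    exact hC.not_indep (hB.indep.subset ((Set.subset_insert_iff_of_notMem heC).1 hCB))
  have hecl : e ∈ M.closure B := by rw [hB.closure_eq]; exact hC.subset_ground heC
  have hindep : M.Indep (insert e B \ {f}) := by
    rw [← hB.indep.mem_fundCircuit_iff hecl heB, ← hC.eq_fundCircuit_of_subset hB.indep hCB]
    exact hfC
  rw [← Set.insert_sdiff_singleton_comm hfe.symm] at hindep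
  exact hB.exchange_isBase_of_indep heB hindep

theorem Indep.exists_colex_min_isBase_superset [LinearOrder α] [M.Finite] (hI : M.Indep I) :
    ∃ B : Finset α, M.IsBase B ∧ I ⊆ B ∧
      ∀ B' : Finset α, M.IsBase B' → I ⊆ B' → toColex B ≤ toColex B' := by
  classical
  set S := M.ground_finite.toFinset.powerset.filter fun B : Finset α ↦ M.IsBase B ∧ I ⊆ B
  have mem_S {B : Finset α} (hB : M.IsBase B) (hIB : I ⊆ B) : B ∈ S := by
    simpa [S, hB, hIB] using hB.subset_ground
  have hS : S.Nonempty := by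
    obtain ⟨B, hB, hIB⟩ := hI.exists_isBase_superset
    have hBfin : B.Finite := hB.finite
    exact ⟨_, mem_S (by rwa [hBfin.coe_toFinset]) (by rwa [hBfin.coe_toFinset])⟩
  obtain ⟨B, hBS, hBmin⟩ := S.exists_min_image toColex hS
  obtain ⟨hB, hIB⟩ := (Finset.mem_filter.1 hBS).2
  exact ⟨B, hB, hIB, fun B' hB' hIB' ↦ hBmin B' (mem_S hB' hIB')⟩

end Matroid

/-- Every NBC independent set of a finite matroid (with a total order on its ground set)
is contained in some NBC basis: the broken circuit complex is pure. -/
theorem nbc_indep_subset_nbc_base {α : Type*} [LinearOrder α] (M : Matroid α) [M.Finite]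
    (I : Set α) (hI : M.IsNBCIndep I) :
    ∃ B, M.IsNBCBase B ∧ I ⊆ B := by
  obtain ⟨B, hB, hIB, hBmin⟩ := hI.1.exists_colex_min_isBase_superset
  refine ⟨B, ⟨hB, ?_⟩, hIB⟩
  rintro _ ⟨C, e, hC, heC, hemin, rfl⟩ hCB
  obtain ⟨f, ⟨hfC, hfe⟩, hfI⟩ := Set.not_subset.1 (hI.2 _ ⟨C, e, hC, heC, hemin, rfl⟩)
  have hCB' : C ⊆ insert e B := Set.sdiff_singleton_subset_iff.1 hCB
  have heB : e ∉ (B : Set α) := fun heB ↦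
    hC.2.1 (hB.indep.subset (hCB'.trans (Set.insert_subset heB subset_rfl)))
  have hB' : M.IsBase ↑(insert e (B.erase f)) := by
    push_cast
    exact hB.exchange_isBase_of_isCircuit_subset_insert hC.isCircuit hCB' heB hfC hfe
  have hIB' : I ⊆ ↑(insert e (B.erase f)) := by
    push_cast
    exact fun x hx ↦ Or.inr ⟨hIB hx, fun hxf ↦ hfI (hxf ▸ hx)⟩
  exact (hBmin _ hB' hIB').not_gt <|
    toColex_insert_erase_lt heB (hCB ⟨hfC, hfe⟩) ((hemin f hfC).lt_of_ne' hfe)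
end

section
/- Given a graph G = (V, E) with vertex weights w : V → R≥0, construct G' by adding a new vertex z and edges e_v = {z, v} for all v ∈ V, and order the edges so that every edge of E precedes every edge e_v. Then for any k, G has an independent set of weight at least k if and only if the graphic matroid of G' has an NBC basis B (with respect to this order) of weight at least k, where edge e_v has weight w(v) and edges of E have weight 0. -/
open SimpleGraph

section NBC

variable {W : Type*} [DecidableEq W]

def IsForestIn (H : SimpleGraph W) (S : Finset (Sym2 W)) : Prop :=
  ↑S ⊆ H.edgeSet ∧ (SimpleGraph.fromEdgeSet (↑S : Set (Sym2 W))).IsAcyclic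

def IsGraphCircuit (H : SimpleGraph W) (C : Finset (Sym2 W)) : Prop :=
  ↑C ⊆ H.edgeSet ∧ ¬ (SimpleGraph.fromEdgeSet (↑C : Set (Sym2 W))).IsAcyclic ∧
    ∀ e ∈ C, (SimpleGraph.fromEdgeSet (↑(C.erase e) : Set (Sym2 W))).IsAcyclic

def IsGraphBasis (H : SimpleGraph W) (B : Finset (Sym2 W)) : Prop :=
  IsForestIn H B ∧ ∀ e ∈ H.edgeSet, e ∉ B → ¬ IsForestIn H (insert e B)

def HasBrokenCircuit (H : SimpleGraph W) (ord : Sym2 W → ℕ) (S : Finset (Sym2 W)) : Prop :=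
  ∃ C e, IsGraphCircuit H C ∧ e ∈ C ∧ (∀ f ∈ C, f ≠ e → ord e < ord f) ∧ C.erase e ⊆ S

def IsNBCBasis (H : SimpleGraph W) (ord : Sym2 W → ℕ) (B : Finset (Sym2 W)) : Prop :=
  IsGraphBasis H B ∧ ¬ HasBrokenCircuit H ord B

end NBC

/-- The cone construction: add a new vertex `z = Sum.inr ()` to `G` and connect it to every
vertex of `G` by the edge `e_v = {z, v}`. -/
def coneGraph {V : Type*} (G : SimpleGraph V) : SimpleGraph (V ⊕ Unit) :=
  G.map (⟨Sum.inl, Sum.inl_injective⟩ : V ↪ V ⊕ Unit) ⊔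
    SimpleGraph.fromEdgeSet {x | ∃ v : V, x = s(Sum.inr (), Sum.inl v)}

/-- The edge `e_v = {z, v}`. -/
def coneEdge {V : Type*} (v : V) : Sym2 (V ⊕ Unit) := s(Sum.inr (), Sum.inl v)

/-!
The feet of the apex edges of an NBC basis of the cone are pairwise non-adjacent: for adjacent `u`,
`v` with `e_u, e_v ∈ B`, the triangle `uv, e_u, e_v` is a circuit with least edge `uv`, so
`{e_u, e_v}` is a broken circuit. Conversely, given an independent `I`, take a forest `B` of the
cone that contains every `e_v` with `v ∈ I`, has pairwise non-adjacent feet, and maximises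
`∑ e ∈ B, 1 / (ord e + 1)`. It is a basis, since adding any edge would raise the sum, and it has no
broken circuit `C - f`: that path would contain an edge `g` of `G` later than `f`, and trading `g`
for `f` would raise the sum as well.
-/

namespace SimpleGraph

variable {W : Type*} {G H : SimpleGraph W} {s : Set (Sym2 W)} {u v x y z : W}

theorem Reachable.of_forall_adj (h : ∀ x y, G.Adj x y → H.Reachable x y)
    (huv : G.Reachable u v) : H.Reachable u v := by
  rw [reachable_iff_reflTransGen] at huv ⊢
  exact huv.lift' id fun a b hab => (reachable_iff_reflTransGen a b).1 (h a b hab)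

theorem Reachable.exists_adj_of_ne (h : G.Reachable x y) (hxy : x ≠ y) : ∃ x', G.Adj x x' := by
  obtain ⟨p⟩ := h
  cases p with
  | nil => exact absurd rfl hxy
  | cons hadj _ => exact ⟨_, hadj⟩

theorem fromEdgeSet_insert_mk (s : Set (Sym2 W)) (x y : W) :
    fromEdgeSet (insert s(x, y) s) = fromEdgeSet s ⊔ edge x y := by
  rw [Set.insert_eq, fromEdgeSet_union, sup_comm, edge]

theorem IsAcyclic.insert_of_not_reachable (hs : (fromEdgeSet s).IsAcyclic)
    (h : ¬ (fromEdgeSet s).Reachable x y) : (fromEdgeSet (insert s(x, y) s)).IsAcyclic := by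
  rw [fromEdgeSet_insert_mk]
  exact hs.sup_edge_of_not_reachable h

theorem reachable_of_not_isAcyclic_insert (hs : (fromEdgeSet s).IsAcyclic)
    (h : ¬ (fromEdgeSet (insert s(x, y) s)).IsAcyclic) : (fromEdgeSet s).Reachable x y := by
  by_contra hnr
  exact h (hs.insert_of_not_reachable hnr)

theorem not_isAcyclic_insert_of_reachable (hxy : x ≠ y) (hs : s(x, y) ∉ s)
    (h : (fromEdgeSet s).Reachable x y) : ¬ (fromEdgeSet (insert s(x, y) s)).IsAcyclic := by
  rw [fromEdgeSet_insert_mk, isAcyclic_sup_fromEdgeSet_iff, fromEdgeSet_adj]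
  tauto

theorem reachable_of_reachable_insert (hxy : (fromEdgeSet s).Reachable x y)
    (h : (fromEdgeSet (insert s(x, y) s)).Reachable u v) : (fromEdgeSet s).Reachable u v := by
  refine h.of_forall_adj fun a b hab => ?_
  rw [fromEdgeSet_insert_mk, sup_adj, edge_adj] at hab
  rcases hab with hab | ⟨⟨rfl, rfl⟩ | ⟨rfl, rfl⟩, -⟩
  · exact hab.reachable
  · exact hxy
  · exact hxy.symm

/-- In a star centred at `z`, the only way out of a leaf `x` is its edge to `z`. -/
theorem mk_mem_of_reachable_of_forall_mem (hz : ∀ e ∈ s, z ∈ e) (hxz : x ≠ z) (hxy : x ≠ y)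
    (h : (fromEdgeSet s).Reachable x y) : s(z, x) ∈ s := by
  obtain ⟨x', hx'⟩ := h.exists_adj_of_ne hxy
  rw [fromEdgeSet_adj] at hx'
  rcases Sym2.mem_iff.1 (hz _ hx'.1) with rfl | rfl
  · exact absurd rfl hxz
  · rw [Sym2.eq_swap]
    exact hx'.1

theorem isAcyclic_fromEdgeSet_of_forall_mem (hz : ∀ e ∈ s, z ∈ e) :
    (fromEdgeSet s).IsAcyclic := by
  have hleaf : ∀ x, x ≠ z → (fromEdgeSet s).IsBridge s(z, x) := by
    intro x hxz hreach
    rw [deleteEdges, ← fromEdgeSet_sdiff] at hreach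
    exact (mk_mem_of_reachable_of_forall_mem (fun e he => hz e he.1) hxz hxz hreach.symm).2 rfl
  rw [isAcyclic_iff_forall_adj_isBridge]
  intro a b hab
  rw [fromEdgeSet_adj] at hab
  rcases Sym2.mem_iff.1 (hz _ hab.1) with rfl | rfl
  · exact hleaf b hab.2.symm
  · rw [Sym2.eq_swap]
    exact hleaf a hab.2

end SimpleGraph

section GraphicMatroid

variable {W : Type*} [DecidableEq W] {H : SimpleGraph W} {B C S : Finset (Sym2 W)}
  {f g : Sym2 W} {x y : W}

theorem IsGraphCircuit.reachable_erase (hC : IsGraphCircuit H C) (h : s(x, y) ∈ C) :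
    (fromEdgeSet ↑(C.erase s(x, y))).Reachable x y := by
  refine reachable_of_not_isAcyclic_insert (hC.2.2 _ h) ?_
  rw [← Finset.coe_insert, Finset.insert_erase h]
  exact hC.2.1

theorem exists_isGraphCircuit_subset (hS : ↑S ⊆ H.edgeSet)
    (hdep : ¬ (fromEdgeSet (S : Set (Sym2 W))).IsAcyclic) : ∃ C ⊆ S, IsGraphCircuit H C := by
  obtain ⟨C, hCS, hC⟩ := exists_minimal_le_of_wellFoundedLT
    (fun C : Finset (Sym2 W) => ¬ (fromEdgeSet (C : Set (Sym2 W))).IsAcyclic) S hdep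
  refine ⟨C, hCS, (Finset.coe_subset.2 hCS).trans hS, hC.prop, fun e he => ?_⟩
  by_contra h
  exact hC.not_prop_of_lt (Finset.erase_ssubset he) h

theorem isAcyclic_insert_erase (hB : (fromEdgeSet (B : Set (Sym2 W))).IsAcyclic)
    (hg : s(x, y) ∈ B) (hxy : x ≠ y)
    (h : (fromEdgeSet (↑(insert f (B.erase s(x, y))) : Set (Sym2 W))).Reachable x y) :
    (fromEdgeSet (↑(insert f (B.erase s(x, y))) : Set (Sym2 W))).IsAcyclic := by
  induction f using Sym2.ind with | _ a b => ?_
  by_contra hcyc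
  have hrest : (fromEdgeSet ↑(B.erase s(x, y))).IsAcyclic :=
    hB.anti (fromEdgeSet_mono (Finset.coe_subset.2 (Finset.erase_subset _ _)))
  rw [Finset.coe_insert] at h hcyc
  have hab := reachable_of_not_isAcyclic_insert hrest hcyc
  refine not_isAcyclic_insert_of_reachable hxy (by simp) (reachable_of_reachable_insert hab h) ?_
  rwa [← Finset.coe_insert, Finset.insert_erase hg]

theorem IsForestIn.insert_erase (hB : IsForestIn H B) (hC : IsGraphCircuit H C) (hf : f ∈ C)
    (hCB : C.erase f ⊆ B) (hg : g ∈ C) (hgf : g ≠ f) : IsForestIn H (insert f (B.erase g)) := by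
  refine ⟨?_, ?_⟩
  · rw [Finset.coe_insert, Set.insert_subset_iff]
    exact ⟨hC.1 hf, (Finset.coe_subset.2 (Finset.erase_subset g B)).trans hB.1⟩
  have hCg : C.erase g ⊆ insert f (B.erase g) := by
    intro t ht
    have := @hCB t
    simp only [Finset.mem_insert, Finset.mem_erase] at ht this ⊢
    tauto
  induction g using Sym2.ind with | _ x y => ?_
  exact isAcyclic_insert_erase hB.2 (hCB (Finset.mem_erase.2 ⟨hgf, hg⟩))
    (H.mem_edgeSet.1 (hC.1 hg)).ne
    ((hC.reachable_erase hg).mono (fromEdgeSet_mono (Finset.coe_subset.2 hCg)))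

end GraphicMatroid

section Cone

variable {V : Type*} {G : SimpleGraph V} {e : Sym2 (V ⊕ Unit)} {u v a b : V}

theorem mem_edgeSet_coneGraph : e ∈ (coneGraph G).edgeSet ↔
    (∃ a b, G.Adj a b ∧ e = s(.inl a, .inl b)) ∨ ∃ v, e = coneEdge v := by
  induction e using Sym2.ind with | _ x y => ?_
  rcases x with x | ⟨⟩ <;> rcases y with y | ⟨⟩ <;> simp [coneGraph, coneEdge, map_adj']
  grind [Adj.ne, Adj.symm]

theorem coneEdge_injective : Function.Injective (coneEdge : V → Sym2 (V ⊕ Unit)) := by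
  intro u v h
  simpa [coneEdge] using h

theorem coneEdge_ne_mk_inl : coneEdge u ≠ s(.inl a, .inl b) := by
  simp [coneEdge]

theorem inr_mem_coneEdge (v : V) : Sum.inr () ∈ coneEdge v :=
  Sym2.mem_mk_left _ _

theorem IsGraphCircuit.exists_mk_inl_mem [DecidableEq V] {C : Finset (Sym2 (V ⊕ Unit))}
    (hC : IsGraphCircuit (coneGraph G) C) : ∃ a b, G.Adj a b ∧ s(.inl a, .inl b) ∈ C := by
  by_contra! h
  refine hC.2.1 (isAcyclic_fromEdgeSet_of_forall_mem (z := Sum.inr ()) fun e he => ?_)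
  rcases mem_edgeSet_coneGraph.1 (hC.1 he) with ⟨a, b, hab, rfl⟩ | ⟨v, rfl⟩
  · exact absurd he (h a b hab)
  · exact inr_mem_coneEdge v

end Cone

section Reduction

variable {V : Type*} {G : SimpleGraph V} {ord : Sym2 (V ⊕ Unit) → ℕ}
  {I : Finset V} {B : Finset (Sym2 (V ⊕ Unit))} {u v : V}

variable (G) in
def IsIndepConeForest (I : Finset V) (B : Finset (Sym2 (V ⊕ Unit))) : Prop :=
  IsForestIn (coneGraph G) B ∧ (∀ u v, coneEdge u ∈ B → coneEdge v ∈ B → ¬ G.Adj u v) ∧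
    ∀ v ∈ I, coneEdge v ∈ B

theorem IsIndepConeForest.of_isForestIn {B' : Finset (Sym2 (V ⊕ Unit))}
    (hB : IsIndepConeForest G I B) (hB' : IsForestIn (coneGraph G) B')
    (hcone : ∀ v, coneEdge v ∈ B' ↔ coneEdge v ∈ B) : IsIndepConeForest G I B' :=
  ⟨hB', fun u v hu hv => hB.2.1 u v ((hcone u).1 hu) ((hcone v).1 hv),
    fun v hv => (hcone v).2 (hB.2.2 v hv)⟩

variable [DecidableEq V]

theorem not_adj_of_coneEdge_mem
    (hord : ∀ a b : V, G.Adj a b → ∀ v : V, ord s(.inl a, .inl b) < ord (coneEdge v))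
    (hB : ¬ HasBrokenCircuit (coneGraph G) ord B) (hu : coneEdge u ∈ B) (hv : coneEdge v ∈ B) :
    ¬ G.Adj u v := by
  intro huv
  set f : Sym2 (V ⊕ Unit) := s(.inl u, .inl v)
  set T : Finset (Sym2 (V ⊕ Unit)) := {coneEdge u, coneEdge v}
  have hT : (fromEdgeSet (T : Set (Sym2 (V ⊕ Unit)))).Reachable (.inl u) (.inl v) := by
    have hzu : (fromEdgeSet (T : Set (Sym2 (V ⊕ Unit)))).Adj (.inr ()) (.inl u) := by
      simp [T, coneEdge]
    have hzv : (fromEdgeSet (T : Set (Sym2 (V ⊕ Unit)))).Adj (.inr ()) (.inl v) := by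
      simp [T, coneEdge]
    exact hzu.reachable.symm.trans hzv.reachable
  have hdep : ¬ (fromEdgeSet (↑(insert f T) : Set (Sym2 (V ⊕ Unit)))).IsAcyclic := by
    rw [Finset.coe_insert]
    exact not_isAcyclic_insert_of_reachable (by simpa using huv.ne)
      (by simp [T, Ne.symm coneEdge_ne_mk_inl]) hT
  have hsub : ↑(insert f T) ⊆ (coneGraph G).edgeSet := by
    intro t ht
    rw [mem_edgeSet_coneGraph]
    simp only [T, Finset.coe_insert, Finset.coe_singleton, Set.mem_insert_iff,
      Set.mem_singleton_iff] at ht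
    rcases ht with rfl | rfl | rfl
    exacts [Or.inl ⟨u, v, huv, rfl⟩, Or.inr ⟨u, rfl⟩, Or.inr ⟨v, rfl⟩]
  obtain ⟨C, hCsub, hC⟩ := exists_isGraphCircuit_subset hsub hdep
  have hmem : ∀ g ∈ C, g = f ∨ g = coneEdge u ∨ g = coneEdge v := fun g hg => by
    simpa [T] using hCsub hg
  have hf : f ∈ C := by
    obtain ⟨a, b, -, habC⟩ := hC.exists_mk_inl_mem
    rcases hmem _ habC with h | h | h
    · exact h ▸ habC
    · exact absurd h.symm coneEdge_ne_mk_inl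
    · exact absurd h.symm coneEdge_ne_mk_inl
  refine hB ⟨C, f, hC, hf, fun g hg hgf => ?_, fun g hg => ?_⟩
  · rcases hmem g hg with rfl | rfl | rfl
    · exact absurd rfl hgf
    · exact hord u v huv u
    · exact hord u v huv v
  · rcases hmem g (Finset.mem_of_mem_erase hg) with rfl | rfl | rfl
    · exact absurd rfl (Finset.ne_of_mem_erase hg)
    · exact hu
    · exact hv

theorem IsIndepConeForest.isGraphBasis (hB : IsIndepConeForest G I B)
    (hmax : ∀ e ∉ B, ¬ IsIndepConeForest G I (insert e B)) : IsGraphBasis (coneGraph G) B := by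
  have hreach : ∀ a b, G.Adj a b →
      (fromEdgeSet (B : Set (Sym2 (V ⊕ Unit)))).Reachable (.inl a) (.inl b) := by
    intro a b hab
    by_cases hmem : s(.inl a, .inl b) ∈ B
    · exact Adj.reachable ((fromEdgeSet_adj _).2 ⟨hmem, by simpa using hab.ne⟩)
    by_contra hnr
    refine hmax _ hmem (hB.of_isForestIn ⟨?_, ?_⟩ fun v => by simp [coneEdge_ne_mk_inl])
    · rw [Finset.coe_insert, Set.insert_subset_iff]
      exact ⟨mem_edgeSet_coneGraph.2 (Or.inl ⟨a, b, hab, rfl⟩), hB.1.1⟩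
    · rw [Finset.coe_insert]
      exact hB.1.2.insert_of_not_reachable hnr
  refine ⟨hB.1, fun e he heB hF => ?_⟩
  rcases mem_edgeSet_coneGraph.1 he with ⟨a, b, hab, rfl⟩ | ⟨u, rfl⟩
  · exact hmax _ heB (hB.of_isForestIn hF fun v => by simp [coneEdge_ne_mk_inl])
  rcases em (∃ v, coneEdge v ∈ B ∧ G.Adj u v) with ⟨v, hvB, huv⟩ | hdom
  · have hzv : (fromEdgeSet (B : Set (Sym2 (V ⊕ Unit)))).Adj (.inr ()) (.inl v) :=
      (fromEdgeSet_adj _).2 ⟨hvB, by simp⟩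
    have hF' := hF.2
    rw [Finset.coe_insert] at hF'
    exact not_isAcyclic_insert_of_reachable (by simp) heB
      (hzv.reachable.trans (hreach v u huv.symm)) hF'
  · refine hmax _ heB ⟨hF, fun x y hx hy => ?_, fun v hv => Finset.mem_insert_of_mem (hB.2.2 v hv)⟩
    rw [Finset.mem_insert, coneEdge_injective.eq_iff] at hx hy
    rcases hx with rfl | hx <;> rcases hy with rfl | hy
    · exact G.irrefl
    · exact fun h => hdom ⟨y, hy, h⟩
    · exact fun h => hdom ⟨x, hx, h.symm⟩
    · exact hB.2.1 x y hx hy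

theorem IsIndepConeForest.not_hasBrokenCircuit
    (hord : ∀ a b : V, G.Adj a b → ∀ v : V, ord s(.inl a, .inl b) < ord (coneEdge v))
    (hB : IsIndepConeForest G I B)
    (hmax : ∀ f ∉ B, ∀ g ∈ B, ord f < ord g → ¬ IsIndepConeForest G I (insert f (B.erase g))) :
    ¬ HasBrokenCircuit (coneGraph G) ord B := by
  rintro ⟨C, f, hC, hfC, hfmin, hCB⟩
  have hfB : f ∉ B := fun hfB => hC.2.1 <| hB.1.2.anti <| fromEdgeSet_mono <| by
    rw [← Finset.insert_erase hfC, Finset.coe_insert, Set.insert_subset_iff]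
    exact ⟨hfB, Finset.coe_subset.2 hCB⟩
  -- every circuit has an edge of `G`, and those precede the apex edges
  obtain ⟨a, b, hab, rfl⟩ : ∃ a b, G.Adj a b ∧ f = s(.inl a, .inl b) := by
    rcases mem_edgeSet_coneGraph.1 (hC.1 hfC) with h | ⟨u, rfl⟩
    · exact h
    obtain ⟨a, b, hab, habC⟩ := hC.exists_mk_inl_mem
    exact absurd (hfmin _ habC coneEdge_ne_mk_inl.symm) (hord a b hab u).asymm
  -- a path from `a` to `b` through the apex alone would use `e_a, e_b ∈ B`
  obtain ⟨c, d, -, hgC⟩ : ∃ c d, G.Adj c d ∧ s(.inl c, .inl d) ∈ C.erase s(.inl a, .inl b) := by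
    by_contra! hcone
    have hstar : ∀ e ∈ (↑(C.erase s(.inl a, .inl b)) : Set (Sym2 (V ⊕ Unit))), .inr () ∈ e := by
      intro e he
      rcases mem_edgeSet_coneGraph.1 (hC.1 (Finset.mem_of_mem_erase he)) with
        ⟨c, d, hcd, rfl⟩ | ⟨v, rfl⟩
      · exact absurd he (hcone c d hcd)
      · exact inr_mem_coneEdge v
    have hreach := hC.reachable_erase hfC
    have hne : (Sum.inl a : V ⊕ Unit) ≠ .inl b := by simpa using hab.ne
    exact hB.2.1 a b
      (hCB (mk_mem_of_reachable_of_forall_mem hstar (by simp) hne hreach))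
      (hCB (mk_mem_of_reachable_of_forall_mem hstar (by simp) hne.symm hreach.symm)) hab
  obtain ⟨hgf, hg⟩ := Finset.mem_erase.1 hgC
  exact hmax _ hfB _ (hCB hgC) (hfmin _ hg hgf) <|
    hB.of_isForestIn (hB.1.insert_erase hC hfC hCB hg hgf) fun v => by
      simp [coneEdge_ne_mk_inl]

theorem exists_isNBCBasis_coneGraph [Fintype V]
    (hord : ∀ a b : V, G.Adj a b → ∀ v : V, ord s(.inl a, .inl b) < ord (coneEdge v))
    (hI : ∀ u ∈ I, ∀ v ∈ I, u ≠ v → ¬ G.Adj u v) :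
    ∃ B, IsNBCBasis (coneGraph G) ord B ∧ ∀ v ∈ I, coneEdge v ∈ B := by
  classical
  have hstar : IsIndepConeForest G I (I.image coneEdge) := by
    refine ⟨⟨?_, isAcyclic_fromEdgeSet_of_forall_mem (z := .inr ()) ?_⟩, ?_, ?_⟩
    · simp [Set.subset_def, mem_edgeSet_coneGraph]
    · simp [inr_mem_coneEdge]
    · simp only [Finset.mem_image, coneEdge_injective.eq_iff, exists_eq_right]
      exact fun u v hu hv h => hI u hu v hv h.ne h
    · exact fun v hv => Finset.mem_image_of_mem _ hv
  let ψ : Finset (Sym2 (V ⊕ Unit)) → ℚ := fun B => ∑ e ∈ B, ((ord e : ℚ) + 1)⁻¹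
  obtain ⟨B, hBmem, hBmax⟩ := Finset.exists_max_image
    (Finset.univ.filter (IsIndepConeForest G I)) ψ
    ⟨_, Finset.mem_filter.2 ⟨Finset.mem_univ _, hstar⟩⟩
  have hmax : ∀ B', IsIndepConeForest G I B' → ψ B' ≤ ψ B :=
    fun B' hB' => hBmax B' (Finset.mem_filter.2 ⟨Finset.mem_univ _, hB'⟩)
  have hB := (Finset.mem_filter.1 hBmem).2
  refine ⟨B, ⟨hB.isGraphBasis fun e he hB' => ?_, hB.not_hasBrokenCircuit hord ?_⟩, hB.2.2⟩
  · have hle := hmax _ hB'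
    simp only [ψ, Finset.sum_insert he] at hle
    have : (0 : ℚ) < ((ord e : ℚ) + 1)⁻¹ := by positivity
    linarith
  · intro f hf g hg hfg hB'
    have hle := hmax _ hB'
    simp only [ψ, Finset.sum_insert fun h => hf (Finset.mem_of_mem_erase h),
      Finset.sum_erase_eq_sub hg] at hle
    have : ((ord g : ℚ) + 1)⁻¹ < ((ord f : ℚ) + 1)⁻¹ := by gcongr
    linarith

end Reduction

theorem indep_set_iff_nbc_basis_weight_general {V : Type*} [Fintype V] [DecidableEq V]
    (G : SimpleGraph V) (w : V → ℝ) (hw : ∀ v, 0 ≤ w v) (k : ℝ)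
    (ord : Sym2 (V ⊕ Unit) → ℕ)
    (hord : ∀ a b : V, G.Adj a b → ∀ v : V, ord s(Sum.inl a, Sum.inl b) < ord (coneEdge v)) :
    (∃ I : Finset V, (∀ u ∈ I, ∀ v ∈ I, u ≠ v → ¬ G.Adj u v) ∧ k ≤ ∑ v ∈ I, w v) ↔
    (∃ B : Finset (Sym2 (V ⊕ Unit)), IsNBCBasis (coneGraph G) ord B ∧
      k ≤ ∑ v : V, if coneEdge v ∈ B then w v else 0) := by
  constructor
  · rintro ⟨I, hI, hk⟩
    obtain ⟨B, hB, hIB⟩ := exists_isNBCBasis_coneGraph hord hI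
    refine ⟨B, hB, hk.trans ?_⟩
    rw [← Finset.sum_filter]
    exact Finset.sum_le_sum_of_subset_of_nonneg (fun v hv => by simpa using hIB v hv)
      fun v _ _ => hw v
  · rintro ⟨B, hB, hk⟩
    refine ⟨Finset.univ.filter (coneEdge · ∈ B), fun u hu v hv _ => ?_, by rwa [Finset.sum_filter]⟩
    exact not_adj_of_coneEdge_mem hord hB.2 (Finset.mem_filter.1 hu).2 (Finset.mem_filter.1 hv).2

/-- Reduction from MAX-INDEP-SET to max-weight NBC basis: for a graph `G` with nonnegative
vertex weights `w`, and any edge ordering of `G'` (the cone over `G`) in which every edge of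
`G` precedes every edge `e_v`, `G` has an independent set of weight `≥ k` iff the graphic
matroid of `G'` has an NBC basis of weight `≥ k`, where edge `e_v` weighs `w v` and edges of
`G` weigh `0`. -/
theorem indep_set_iff_nbc_basis_weight {V : Type*} [Fintype V] [DecidableEq V]
    (G : SimpleGraph V) (w : V → ℝ) (hw : ∀ v, 0 ≤ w v) (k : ℝ)
    (ord : Sym2 (V ⊕ Unit) → ℕ) (hordinj : Function.Injective ord)
    (hord : ∀ a b : V, G.Adj a b → ∀ v : V, ord s(Sum.inl a, Sum.inl b) < ord (coneEdge v)) :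
    (∃ I : Finset V, (∀ u ∈ I, ∀ v ∈ I, u ≠ v → ¬ G.Adj u v) ∧ k ≤ ∑ v ∈ I, w v) ↔
    (∃ B : Finset (Sym2 (V ⊕ Unit)), IsNBCBasis (coneGraph G) ord B ∧
      k ≤ ∑ v : V, if coneEdge v ∈ B then w v else 0) :=
  indep_set_iff_nbc_basis_weight_general G w hw k ord hord
end
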